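/- arXiv:2001.09278 — 8 statements merged into one kernel-verified Lean document; each statement's English description precedes it below -/
import Mathlib

section
/- Let r and s be reflections of a finite-dimensional vector space M over a field K of characteristic 0, with direction vectors a and b forming a linearly independent family, so that r(b) = b + λa and s(a) = a + μb for some λ, μ in K. Then the product rs has order 2 if and only if λ = 0 and μ = 0. -/
/-! For involutions `r` and `s`, `(r * s) ^ 2 = 1` says `r * s = (r * s)⁻¹ = s * r`, so `r * s` has
order 2 exactly when `r` and `s` are distinct and commute. Comparing `r (s a)` with `s (r a)` gives
`μ λ • a + 2 μ • b = 0`, hence `μ = 0` by independence, and symmetrically `λ = 0`. Conversely, if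
`λ = μ = 0` then `r` fixes `b`, `s` fixes `a`, and `r x = x + d • a`, `s x = x + c • b` show that
`r` and `s` commute; they differ because `r a = -a ≠ a + μ • b = s a`. -/

section Involution

variable {G : Type*} [Monoid G] {r s : G}

theorem mul_eq_one_iff_eq_of_mul_self (hr : r * r = 1) : r * s = 1 ↔ r = s :=
  ⟨left_inv_eq_right_inv hr, fun h => h ▸ hr⟩

theorem mul_self_eq_one_iff_commute (hr : r * r = 1) (hs : s * s = 1) :
    (r * s) * (r * s) = 1 ↔ Commute r s := by
  have hinv : (r * s) * (s * r) = 1 := by rw [mul_assoc, ← mul_assoc s, hs, one_mul, hr]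
  constructor
  · intro h
    exact left_inv_eq_right_inv h hinv
  · intro h
    rwa [← h.eq] at hinv

theorem orderOf_mul_eq_two_iff (hr : r * r = 1) (hs : s * s = 1) :
    orderOf (r * s) = 2 ↔ r ≠ s ∧ Commute r s := by
  have : Fact (Nat.Prime 2) := ⟨Nat.prime_two⟩
  rw [orderOf_eq_prime_iff, pow_two, mul_self_eq_one_iff_commute hr hs,
    Ne, mul_eq_one_iff_eq_of_mul_self hr, and_comm]

end Involution

namespace Module.End

variable {K M : Type*} [Field K] [AddCommGroup M] [Module K M] {r s : Module.End K M} {a b : M}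
  {lam mu : K}

theorem ne_of_apply_eq_neg_of_apply_eq_add [CharZero K] (hab : LinearIndependent K ![a, b])
    (hra : r a = -a) (hsa : s a = a + mu • b) : r ≠ s := by
  rintro rfl
  have hcomb : (2 : K) • a + mu • b = 0 := by
    linear_combination (norm := module) hra - hsa
  exact two_ne_zero (LinearIndependent.pair_iff.mp hab _ _ hcomb).1

theorem coeff_eq_zero_of_apply_comm [CharZero K] (hab : LinearIndependent K ![a, b])
    (hra : r a = -a) (hrb : r b = b + lam • a) (hsa : s a = a + mu • b)
    (hcomm : r (s a) = s (r a)) : mu = 0 := by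
  rw [hsa, hra, map_add, map_smul, hra, hrb, map_neg, hsa] at hcomm
  have hcomb : (mu * lam) • a + (2 * mu) • b = 0 := by
    linear_combination (norm := module) hcomm
  simpa using (LinearIndependent.pair_iff.mp hab _ _ hcomb).2

theorem commute_of_fix_direction (hrdir : ∀ x : M, r x - x ∈ Submodule.span K ({a} : Set M))
    (hsdir : ∀ x : M, s x - x ∈ Submodule.span K ({b} : Set M)) (hrb : r b = b) (hsa : s a = a) :
    Commute r s := by
  ext x
  obtain ⟨d, hd⟩ := Submodule.mem_span_singleton.mp (hrdir x)
  obtain ⟨c, hc⟩ := Submodule.mem_span_singleton.mp (hsdir x)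
  have hrx : r x = x + d • a := by rw [hd]; abel
  have hsx : s x = x + c • b := by rw [hc]; abel
  simp only [mul_apply, hrx, hsx, map_add, map_smul, hrb, hsa]
  abel

end Module.End

open Module.End in
theorem order_two_iff_coeffs_zero_general
    (K M : Type*) [Field K] [CharZero K] [AddCommGroup M] [Module K M]
    (r s : Module.End K M) (a b : M) (lam mu : K)
    (hr2 : r * r = 1) (hs2 : s * s = 1)
    (hra : r a = -a) (hsb : s b = -b)
    (hrb : r b = b + lam • a) (hsa : s a = a + mu • b)
    (hrdir : ∀ x : M, r x - x ∈ Submodule.span K ({a} : Set M))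
    (hsdir : ∀ x : M, s x - x ∈ Submodule.span K ({b} : Set M))
    (hab : LinearIndependent K ![a, b]) :
    orderOf (r * s) = 2 ↔ lam = 0 ∧ mu = 0 := by
  rw [orderOf_mul_eq_two_iff hr2 hs2]
  constructor
  · rintro ⟨-, hcomm⟩
    refine ⟨?_, coeff_eq_zero_of_apply_comm hab hra hrb hsa (LinearMap.congr_fun hcomm a)⟩
    exact coeff_eq_zero_of_apply_comm (LinearIndependent.pair_symm_iff.mp hab) hsb hsa hrb
      (LinearMap.congr_fun hcomm b).symm
  · rintro ⟨rfl, rfl⟩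
    rw [zero_smul, add_zero] at hrb hsa
    exact ⟨ne_of_apply_eq_neg_of_apply_eq_add hab hra (by rw [hsa, zero_smul, add_zero]),
      commute_of_fix_direction hrdir hsdir hrb hsa⟩

/-- If `r` and `s` are reflections of a finite-dimensional vector space `M` over a field `K`
of characteristic 0, with direction vectors `a` and `b` forming a linearly independent family,
and `r b = b + λ • a`, `s a = a + μ • b`, then `r * s` has order 2 iff `λ = 0` and `μ = 0`. -/
theorem order_two_iff_coeffs_zero
    (K M : Type*) [Field K] [CharZero K] [AddCommGroup M] [Module K M]
    [FiniteDimensional K M]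
    (r s : Module.End K M) (a b : M) (lam mu : K)
    (hr2 : r * r = 1) (hs2 : s * s = 1)
    (hra : r a = -a) (hsb : s b = -b)
    (hrb : r b = b + lam • a) (hsa : s a = a + mu • b)
    (hrdir : ∀ x : M, r x - x ∈ Submodule.span K ({a} : Set M))
    (hsdir : ∀ x : M, s x - x ∈ Submodule.span K ({b} : Set M))
    (hab : LinearIndependent K ![a, b]) :
    orderOf (r * s) = 2 ↔ lam = 0 ∧ mu = 0 :=
  order_two_iff_coeffs_zero_general K M r s a b lam mu hr2 hs2 hra hsb hrb hsa hrdir hsdir hab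
end

section
/- Let M be a vector space of dimension m over a field K of characteristic 0, and let r, s be reflections of M with linearly independent direction vectors a, b. Then the characteristic polynomial of rs is (X-1)^{m-2} (X² - (C(r,s) - 2)X + 1), where C(r,s) is the Cartan coefficient of (r,s). In particular Tr(rs) = m - 4 + C(r,s). -/
/-!
Both reflections move vectors only inside `W = span {a, b}`, hence so does `rs`: `W` is
`rs`-invariant and `rs` induces the identity on `M / W`. In a basis of `M` extending one of `W`
the matrix of `rs` is block upper triangular with diagonal blocks `!![λμ - 1, -λ; μ, -1]`
(trace `λμ - 2`, determinant `1`) and the identity of size `m - 2`, which gives both the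
characteristic polynomial and the trace.
-/

open Module Submodule Polynomial

namespace Matrix

lemma trace_fromBlocks {l m R : Type*} [Fintype l] [Fintype m] [AddCommMonoid R]
    (A : Matrix l l R) (B : Matrix l m R) (C : Matrix m l R) (D : Matrix m m R) :
    (fromBlocks A B C D).trace = A.trace + D.trace := by
  simp [trace, Fintype.sum_sum_type]

end Matrix

lemma LinearMap.toMatrix_eq_of_forall_apply {R N ι : Type*} [CommRing R] [AddCommGroup N]
    [Module R N] [Fintype ι] [DecidableEq ι] (b : Basis ι R N) {g : Module.End R N}
    {A : Matrix ι ι R} (h : ∀ j, g (b j) = ∑ i, A i j • b i) :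
    LinearMap.toMatrix b b g = A := by
  rw [← LinearMap.toMatrix_toLin b b A]
  exact congrArg _ (b.ext fun j ↦ by rw [h, Matrix.toLin_self])

namespace Module.Basis

variable {K M ι κ : Type*} [Field K] [AddCommGroup M] [Module K M] {W W' : Submodule K M}

noncomputable def ofIsCompl (h : IsCompl W W') (bW : Basis ι K W) (bW' : Basis κ K W') :
    Basis (ι ⊕ κ) K M :=
  (bW.prod bW').map (prodEquivOfIsCompl W W' h)

variable (h : IsCompl W W') (bW : Basis ι K W) (bW' : Basis κ K W')

lemma ofIsCompl_apply_inl (i : ι) : ofIsCompl h bW bW' (Sum.inl i) = bW i := by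
  simp [ofIsCompl]

lemma ofIsCompl_apply_inr (j : κ) : ofIsCompl h bW bW' (Sum.inr j) = bW' j := by
  simp [ofIsCompl]

lemma ofIsCompl_repr_inl (w : W) (i : ι) :
    (ofIsCompl h bW bW').repr w (Sum.inl i) = bW.repr w i := by
  simp [ofIsCompl]

lemma ofIsCompl_repr_inr (w : W) (j : κ) : (ofIsCompl h bW bW').repr w (Sum.inr j) = 0 := by
  simp [ofIsCompl]

end Module.Basis

namespace Module.End

variable {K M : Type*} [Field K] [AddCommGroup M] [Module K M] {W : Submodule K M}
  {f : End K M}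

lemma mapsTo_of_sub_mem (hf : ∀ x, f x - x ∈ W) : ∀ x ∈ W, f x ∈ W := fun x hx ↦ by
  simpa using W.add_mem (hf x) hx

lemma mul_apply_sub_mem {g : End K M} (hf : ∀ x, f x - x ∈ W) (hg : ∀ x, g x - x ∈ W)
    (x : M) : (f * g) x - x ∈ W := by
  simpa using W.add_mem (hf (g x)) (hg x)

lemma toMatrix_ofIsCompl_of_sub_mem {ι κ : Type*} [Fintype ι] [Fintype κ] [DecidableEq ι]
    [DecidableEq κ] {W' : Submodule K M} (h : IsCompl W W') (bW : Basis ι K W)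
    (bW' : Basis κ K W') (hf : ∀ x, f x - x ∈ W) :
    let e := Basis.ofIsCompl h bW bW'
    LinearMap.toMatrix e e f = Matrix.fromBlocks
      (LinearMap.toMatrix bW bW (f.restrict (mapsTo_of_sub_mem hf)))
      (LinearMap.toMatrix e e f).toBlocks₁₂ 0 1 := by
  intro e
  ext (i | i) (j | j)
  · have := Basis.ofIsCompl_repr_inl h bW bW' (f.restrict (mapsTo_of_sub_mem hf) (bW j)) i
    simpa [LinearMap.toMatrix_apply, e, Basis.ofIsCompl_apply_inl] using this
  · rfl
  · have := Basis.ofIsCompl_repr_inr h bW bW' (f.restrict (mapsTo_of_sub_mem hf) (bW j)) i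
    simpa [LinearMap.toMatrix_apply, e, Basis.ofIsCompl_apply_inl] using this
  · have hmove := Basis.ofIsCompl_repr_inr h bW bW' ⟨_, hf (bW' j)⟩ i
    have hsplit : f (bW' j) = (f (bW' j) - bW' j) + bW' j := by abel
    rw [LinearMap.toMatrix_apply, Basis.ofIsCompl_apply_inr, hsplit, map_add, Finsupp.add_apply]
    simp only [e] at hmove ⊢
    rw [hmove, ← Basis.ofIsCompl_apply_inr h bW bW', Basis.repr_self]
    simp [Finsupp.single_apply, Matrix.one_apply, eq_comm]

variable [FiniteDimensional K M]

lemma charpoly_eq_charpoly_restrict_mul_of_sub_mem (hf : ∀ x, f x - x ∈ W) :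
    f.charpoly = (f.restrict (mapsTo_of_sub_mem hf)).charpoly *
      (X - 1) ^ (finrank K M - finrank K W) := by
  obtain ⟨W', h⟩ := W.exists_isCompl
  rw [← LinearMap.charpoly_toMatrix f (Basis.ofIsCompl h (finBasis K W) (finBasis K W')),
    toMatrix_ofIsCompl_of_sub_mem h _ _ hf, Matrix.charpoly_fromBlocks_zero₂₁,
    LinearMap.charpoly_toMatrix, Matrix.charpoly_one, Fintype.card_fin,
    ← finrank_add_eq_of_isCompl h, Nat.add_sub_cancel_left]

lemma trace_eq_trace_restrict_add_of_sub_mem (hf : ∀ x, f x - x ∈ W) :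
    LinearMap.trace K M f =
      LinearMap.trace K W (f.restrict (mapsTo_of_sub_mem hf)) + finrank K M - finrank K W := by
  obtain ⟨W', h⟩ := W.exists_isCompl
  rw [LinearMap.trace_eq_matrix_trace K (Basis.ofIsCompl h (finBasis K W) (finBasis K W')),
    toMatrix_ofIsCompl_of_sub_mem h _ _ hf, Matrix.trace_fromBlocks,
    ← LinearMap.trace_eq_matrix_trace, Matrix.trace_one, Fintype.card_fin,
    ← finrank_add_eq_of_isCompl h]
  push_cast
  ring

end Module.End

theorem charpoly_of_product_of_reflections_general
    (K M : Type*) [Field K] [AddCommGroup M] [Module K M]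
    [FiniteDimensional K M] (m : ℕ) (hm : Module.finrank K M = m)
    (r s : Module.End K M) (a b : M) (lam mu : K)
    (hra : r a = -a) (hsb : s b = -b)
    (hrb : r b = b + lam • a) (hsa : s a = a + mu • b)
    (hrdir : ∀ x : M, r x - x ∈ Submodule.span K ({a} : Set M))
    (hsdir : ∀ x : M, s x - x ∈ Submodule.span K ({b} : Set M))
    (hab : LinearIndependent K ![a, b]) :
    (r * s).charpoly = (X - 1) ^ (m - 2) * (X ^ 2 - C (lam * mu - 2) * X + 1) ∧
      LinearMap.trace K M (r * s) = (m : K) - 4 + lam * mu := by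
  have hmove : ∀ x, (r * s) x - x ∈ span K (Set.range ![a, b]) :=
    End.mul_apply_sub_mem (fun x ↦ span_mono (by simp) (hrdir x))
      (fun x ↦ span_mono (by simp) (hsdir x))
  have hrsa : (r * s) a = (lam * mu - 1) • a + mu • b := by
    rw [End.mul_apply, hsa, map_add, map_smul, hra, hrb]
    module
  have hrsb : (r * s) b = -lam • a + -1 • b := by
    rw [End.mul_apply, hsb, map_neg, hrb]
    module
  have hmatrix : LinearMap.toMatrix (Basis.span hab) (Basis.span hab)
      ((r * s).restrict (End.mapsTo_of_sub_mem hmove)) = !![lam * mu - 1, -lam; mu, -1] := by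
    refine LinearMap.toMatrix_eq_of_forall_apply _ fun j ↦ Subtype.ext ?_
    fin_cases j <;> simp [Basis.span_apply, Fin.sum_univ_two, hrsa, hrsb]
  have hrank : finrank K (span K (Set.range ![a, b])) = 2 := by
    simp [finrank_span_eq_card hab]
  have hcharpoly :
      (!![lam * mu - 1, -lam; mu, -1]).charpoly = X ^ 2 - C (lam * mu - 2) * X + 1 := by
    rw [Matrix.charpoly_fin_two, Matrix.trace_fin_two_of, Matrix.det_fin_two_of,
      show lam * mu - 1 + -1 = lam * mu - 2 by ring,
      show (lam * mu - 1) * -1 - -lam * mu = 1 by ring, map_one]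
  constructor
  · rw [End.charpoly_eq_charpoly_restrict_mul_of_sub_mem hmove,
      ← LinearMap.charpoly_toMatrix _ (Basis.span hab), hmatrix, hcharpoly, hrank, hm, mul_comm]
  · rw [End.trace_eq_trace_restrict_add_of_sub_mem hmove,
      LinearMap.trace_eq_matrix_trace K (Basis.span hab), hmatrix, hrank, hm,
      Matrix.trace_fin_two_of]
    ring

/-- The characteristic polynomial of the product of two reflections with linearly
independent direction vectors is `(X-1)^(m-2) * (X² - (C(r,s) - 2)X + 1)`, where
`C(r,s) = λμ` is the Cartan coefficient; in particular `Tr(rs) = m - 4 + C(r,s)`. -/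
theorem charpoly_of_product_of_reflections
    (K M : Type*) [Field K] [CharZero K] [AddCommGroup M] [Module K M]
    [FiniteDimensional K M] (m : ℕ) (hm : Module.finrank K M = m) (hm2 : 2 ≤ m)
    (r s : Module.End K M) (a b : M) (lam mu : K)
    (hr2 : r * r = 1) (hs2 : s * s = 1)
    (hra : r a = -a) (hsb : s b = -b)
    (hrb : r b = b + lam • a) (hsa : s a = a + mu • b)
    (hrdir : ∀ x : M, r x - x ∈ Submodule.span K ({a} : Set M))
    (hsdir : ∀ x : M, s x - x ∈ Submodule.span K ({b} : Set M))
    (hab : LinearIndependent K ![a, b]) :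
    (r * s).charpoly = (X - 1) ^ (m - 2) * (X ^ 2 - C (lam * mu - 2) * X + 1) ∧
      LinearMap.trace K M (r * s) = (m : K) - 4 + lam * mu :=
  charpoly_of_product_of_reflections_general K M m hm r s a b lam mu hra hsb hrb hsa hrdir hsdir hab
end

section
/- Let r and s be distinct reflections of a finite-dimensional vector space M over a field K of characteristic 0, whose direction vectors span the same line. Then rs is unipotent and not the identity. -/
/-!
Both `r - 1` and `s - 1` take values in the common line `L = K a = K b`, hence so does
`r s - 1 = (r - 1) s + (s - 1)`. Since `s` acts on `L` by `-1` just as `r` does, `r s` fixes `L`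
pointwise, so `r s - 1` maps everything into its own kernel and squares to zero. Finally `r s = 1`
would force `r = s⁻¹ = s`.
-/

open Submodule

namespace Module.End

variable {R M : Type*} [Semiring R] [AddCommGroup M] [Module R M]

theorem apply_eq_neg_of_mem_span_singleton {f : Module.End R M} {a b : M} (hb : f b = -b)
    (ha : a ∈ R ∙ b) : f a = -a := by
  obtain ⟨c, rfl⟩ := mem_span_singleton.mp ha
  rw [map_smul, hb, smul_neg]

theorem mul_apply_sub_mem_s4 {p : Submodule R M} {r s : Module.End R M} (hr : ∀ x, r x - x ∈ p)
    (hs : ∀ x, s x - x ∈ p) (x : M) : (r * s) x - x ∈ p := by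
  simpa only [mul_apply, sub_add_sub_cancel] using p.add_mem (hr (s x)) (hs x)

theorem sq_eq_zero_of_range_le_ker {g : Module.End R M}
    (h : LinearMap.range g ≤ LinearMap.ker g) : g ^ 2 = 0 := by
  rw [sq, mul_eq_comp]
  exact LinearMap.range_le_ker_iff.mp h

end Module.End

theorem unipotent_of_same_direction_line_general
    (K M : Type*) [Field K] [AddCommGroup M] [Module K M]
    (r s : Module.End K M) (a b : M)
    (hs2 : s * s = 1)
    (hra : r a = -a) (hsb : s b = -b)
    (hrdir : ∀ x : M, r x - x ∈ Submodule.span K ({a} : Set M))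
    (hsdir : ∀ x : M, s x - x ∈ Submodule.span K ({b} : Set M))
    (hline : Submodule.span K ({a} : Set M) = Submodule.span K ({b} : Set M))
    (hrs : r ≠ s) :
    IsNilpotent (r * s - 1) ∧ r * s ≠ 1 := by
  have hsa : s a = -a :=
    Module.End.apply_eq_neg_of_mem_span_singleton hsb (hline ▸ mem_span_singleton_self a)
  have hrange : LinearMap.range (r * s - 1) ≤ K ∙ a := by
    rintro _ ⟨x, rfl⟩
    exact Module.End.mul_apply_sub_mem_s4 hrdir (hline ▸ hsdir) x
  have hker : K ∙ a ≤ LinearMap.ker (r * s - 1) := by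
    rw [span_singleton_le_iff_mem, LinearMap.mem_ker, LinearMap.sub_apply,
      Module.End.mul_apply, hsa, map_neg, hra, neg_neg, Module.End.one_apply, sub_self]
  refine ⟨⟨2, Module.End.sq_eq_zero_of_range_le_ker (hrange.trans hker)⟩, fun h => hrs ?_⟩
  exact left_inv_eq_right_inv h hs2

/-- If `r` and `s` are distinct reflections whose direction vectors span the same line,
then `rs` is unipotent and not the identity. -/
theorem unipotent_of_same_direction_line
    (K M : Type*) [Field K] [CharZero K] [AddCommGroup M] [Module K M]
    [FiniteDimensional K M]
    (r s : Module.End K M) (a b : M)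
    (hr2 : r * r = 1) (hs2 : s * s = 1)
    (ha : a ≠ 0) (hb : b ≠ 0)
    (hra : r a = -a) (hsb : s b = -b)
    (hrdir : ∀ x : M, r x - x ∈ Submodule.span K ({a} : Set M))
    (hsdir : ∀ x : M, s x - x ∈ Submodule.span K ({b} : Set M))
    (hline : Submodule.span K ({a} : Set M) = Submodule.span K ({b} : Set M))
    (hrs : r ≠ s) :
    IsNilpotent (r * s - 1) ∧ r * s ≠ 1 :=
  unipotent_of_same_direction_line_general K M r s a b hs2 hra hsb hrdir hsdir hline hrs
end

section
/- Let G be a subgroup of GL(M) generated by a set S of reflections with |S| = dim M = n, such that all products st (s,t ∈ S) have finite order, the Coxeter graph Γ(G) is connected, and the direction vectors (a_s)_{s∈S} form a basis of M. Then every element of the centralizer C_{GL(M)}(G) is a scalar map. -/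
/-!
An element `z` of the centralizer commutes with each reflection `s i`, so it maps the
`(-1)`-eigenspace of `s i`, the line spanned by `a i`, to itself: `z (a i) = k i • a i`.
Comparing `z (s i (a j))` with `s i (z (a j))` for an edge `(i, j)` of the Coxeter graph
gives `c i j * k i = c i j * k j`, hence `k i = k j`. Connectedness makes `k` constant, and
`z` is this constant on a basis.
-/

theorem SimpleGraph.Reachable.apply_eq_of_forall_adj {V α : Type*} {G : SimpleGraph V}
    {f : V → α} (hf : ∀ u v, G.Adj u v → f u = f v) {u v : V} (huv : G.Reachable u v) :
    f u = f v := by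
  obtain ⟨w⟩ := huv
  induction w with
  | nil => rfl
  | cons hadj _ ih => exact (hf _ _ hadj).trans ih

section Reflection

variable {K M : Type*} [Field K] [AddCommGroup M] [Module K M]

theorem mem_span_singleton_of_apply_eq_neg {r : M → M} {a v : M} (h2 : (2 : K) ≠ 0)
    (hr : ∀ x, r x - x ∈ K ∙ a) (hv : r v = -v) : v ∈ K ∙ a := by
  have h : (-2 : K) • v ∈ K ∙ a := by
    convert hr v using 1
    rw [hv, neg_smul, two_smul]
    abel
  exact (Submodule.smul_mem_iff _ (neg_ne_zero.mpr h2)).mp h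

theorem eq_of_apply_eq_add_smul_of_commute {z r : M →ₗ[K] M} {a b : M} {c k l : K}
    (hzr : ∀ x, z (r x) = r (z x)) (hb : r b = b + c • a) (hc : c ≠ 0) (ha : a ≠ 0)
    (hza : z a = k • a) (hzb : z b = l • b) : k = l := by
  have h := hzr b
  rw [hb, map_add, map_smul, hza, hzb, map_smul, hb, smul_add, smul_smul, smul_smul,
    add_right_inj, mul_comm l c] at h
  exact mul_left_cancel₀ hc (smul_left_injective K ha h)

end Reflection

theorem centralizer_is_scalar_general
    (K M : Type*) [Field K] [CharZero K] [AddCommGroup M] [Module K M]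
    (ι : Type*) (a : Module.Basis ι K M)
    (s : ι → (M ≃ₗ[K] M)) (c : ι → ι → K)
    -- each `s i` is a reflection with direction vector `a i`
    (hsa : ∀ i, s i (a i) = -(a i))
    (hdir : ∀ i, ∀ x : M, s i x - x ∈ Submodule.span K ({a i} : Set M))
    -- the coefficients of the action on the basis
    (hact : ∀ i j, i ≠ j → s i (a j) = a j + c i j • a i)
    -- the Coxeter graph is connected
    (hconn : (SimpleGraph.fromRel fun i j => c i j ≠ 0 ∧ c j i ≠ 0).Connected)
    -- `z` centralizes `G`
    (z : M ≃ₗ[K] M)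
    (hz : ∀ g ∈ Subgroup.closure (Set.range s), Commute z g) :
    ∃ k : K, ∀ m : M, z m = k • m := by
  have hcomm (i : ι) (x : M) : z (s i x) = s i (z x) :=
    LinearEquiv.congr_fun (hz (s i) (Subgroup.subset_closure ⟨i, rfl⟩)).eq x
  have hline (i : ι) : ∃ k : K, k • a i = z (a i) := Submodule.mem_span_singleton.mp <|
    mem_span_singleton_of_apply_eq_neg (r := s i) two_ne_zero (hdir i)
      (by simp [← hcomm, hsa])
  choose k hk using hline
  have hk_adj (i j : ι)
      (hij : (SimpleGraph.fromRel fun i j => c i j ≠ 0 ∧ c j i ≠ 0).Adj i j) : k i = k j := by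
    obtain ⟨hne, hc | hc⟩ := hij
    · exact eq_of_apply_eq_add_smul_of_commute (r := (s i : M →ₗ[K] M)) (hcomm i)
        (hact i j hne) hc.1 (a.ne_zero i) (hk i).symm (hk j).symm
    · exact (eq_of_apply_eq_add_smul_of_commute (r := (s j : M →ₗ[K] M)) (hcomm j)
        (hact j i (Ne.symm hne)) hc.1 (a.ne_zero j) (hk j).symm (hk i).symm).symm
  obtain ⟨i₀⟩ := hconn.nonempty
  refine ⟨k i₀, fun m => LinearMap.congr_fun (a.ext (f₁ := z.toLinearMap)
    (f₂ := k i₀ • LinearMap.id) fun i => ?_) m⟩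
  rw [(hconn.preconnected i₀ i).apply_eq_of_forall_adj hk_adj]
  simp [hk]

/-- Let `G ≤ GL(M)` be generated by reflections `s i` with direction vectors forming a
basis, all products of finite order, and connected Coxeter graph. Then every element of
the centralizer of `G` in `GL(M)` is a scalar map. -/
theorem centralizer_is_scalar
    (K M : Type*) [Field K] [CharZero K] [AddCommGroup M] [Module K M]
    (ι : Type*) [Fintype ι] (a : Module.Basis ι K M)
    (s : ι → (M ≃ₗ[K] M)) (c : ι → ι → K)
    -- each `s i` is a reflection with direction vector `a i`
    (hs2 : ∀ i, s i * s i = 1) (hs1 : ∀ i, s i ≠ 1)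
    (hsa : ∀ i, s i (a i) = -(a i))
    (hdir : ∀ i, ∀ x : M, s i x - x ∈ Submodule.span K ({a i} : Set M))
    -- the coefficients of the action on the basis
    (hact : ∀ i j, i ≠ j → s i (a j) = a j + c i j • a i)
    -- for noncommuting pairs both coefficients are nonzero; for commuting distinct
    -- pairs both vanish
    (hedge : ∀ i j, i ≠ j → (Commute (s i) (s j) ↔ c i j = 0 ∧ c j i = 0))
    -- all products have finite order
    (hfin : ∀ i j, IsOfFinOrder (s i * s j))
    -- the Coxeter graph is connected
    (hconn : (SimpleGraph.fromRel fun i j => c i j ≠ 0 ∧ c j i ≠ 0).Connected)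
    -- `z` centralizes `G`
    (z : M ≃ₗ[K] M)
    (hz : ∀ g ∈ Subgroup.closure (Set.range s), Commute z g) :
    ∃ k : K, ∀ m : M, z m = k • m :=
  centralizer_is_scalar_general K M ι a s c hsa hdir hact hconn z hz
end

section
/- Let G ≤ GL(M) be a reflection group as above (|S| = dim M, all m_{st} finite, Γ(G) connected, direction vectors a basis). If the space of G-fixed vectors C_M(G) is nonzero, then the center Z(G) is trivial. -/
/-!
A central element `z` commutes with every reflection `s i`. Since `s i` negates `a i` and moves
vectors only along `a i`, it also negates `z (a i)`, so `z (a i)` lies on the line `K ∙ a i`: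
`z` is diagonal in the basis `a`. Commuting with `s i` then forces the
eigenvalues at `a i` and `a j` to agree whenever `c i j ≠ 0`, so by connectedness `z` is a scalar,
and the scalar is `1` because `z` fixes the nonzero vector `m`.
-/

theorem SimpleGraph.Reachable.eq_of_forall_adj {V α : Type*} {G : SimpleGraph V} (f : V → α)
    (hf : ∀ u v, G.Adj u v → f u = f v) {u v : V} (huv : G.Reachable u v) : f u = f v := by
  obtain ⟨p⟩ := huv
  induction p with
  | nil => rfl
  | cons hadj _ ih => exact (hf _ _ hadj).trans ih

section Reflection

variable {K M : Type*} [Field K] [AddCommGroup M] [Module K M]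

theorem mem_span_singleton_of_apply_eq_neg_s8 [NeZero (2 : K)] {r : M →ₗ[K] M} {v y : M}
    (hdir : r y - y ∈ K ∙ v) (hy : r y = -y) : y ∈ K ∙ v := by
  rw [hy, ← neg_add', ← two_smul K, ← neg_smul] at hdir
  exact (Submodule.smul_mem_iff _ (neg_ne_zero.mpr two_ne_zero)).mp hdir

theorem exists_apply_eq_smul_of_commute_reflection [NeZero (2 : K)] {z r : Module.End K M} {v : M}
    (hzr : Commute z r) (hdir : ∀ x, r x - x ∈ K ∙ v) (hv : r v = -v) :
    ∃ k : K, z v = k • v := by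
  have hneg : r (z v) = -z v := by
    rw [← Module.End.mul_apply, ← hzr.eq, Module.End.mul_apply, hv, map_neg]
  obtain ⟨k, hk⟩ := Submodule.mem_span_singleton.mp
    (mem_span_singleton_of_apply_eq_neg_s8 (hdir (z v)) hneg)
  exact ⟨k, hk.symm⟩

theorem eigenvalue_eq_of_commute_of_apply_eq_add_smul {z r : Module.End K M} {u v : M}
    {k l c : K} (hzr : Commute z r) (hu : z u = k • u) (hv : z v = l • v)
    (hr : r v = v + c • u) (hc : c ≠ 0) (hu0 : u ≠ 0) : k = l := by
  have h := congrArg (· v) hzr.eq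
  simp only [Module.End.mul_apply, hr, hv, map_add, map_smul, hu, smul_add, smul_smul,
    add_right_inj] at h
  have h' : (c * (k - l)) • u = 0 := by rw [mul_sub, sub_smul, h, mul_comm, sub_self]
  exact sub_eq_zero.mp ((mul_eq_zero.mp ((smul_eq_zero.mp h').resolve_right hu0)).resolve_left hc)

theorem Module.End.eq_one_of_apply_basis_eq_smul {ι : Type*} {z : Module.End K M}
    (a : Module.Basis ι K M) {k : K} (hz : ∀ i, z (a i) = k • a i) {m : M} (hm : m ≠ 0)
    (hzm : z m = m) : z = 1 := by
  have hzk : z = k • 1 := a.ext fun i ↦ by simp [hz]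
  have hk : k = 1 := smul_left_injective K hm <| by
    simpa [hzk] using hzm
  rw [hzk, hk, one_smul]

end Reflection

theorem center_trivial_of_fixed_vector_general
    (K M : Type*) [Field K] [CharZero K] [AddCommGroup M] [Module K M]
    (ι : Type*) (a : Module.Basis ι K M)
    (s : ι → (M ≃ₗ[K] M)) (c : ι → ι → K)
    (hsa : ∀ i, s i (a i) = -(a i))
    (hdir : ∀ i, ∀ x : M, s i x - x ∈ Submodule.span K ({a i} : Set M))
    (hact : ∀ i j, i ≠ j → s i (a j) = a j + c i j • a i)
    (hconn : (SimpleGraph.fromRel fun i j => c i j ≠ 0 ∧ c j i ≠ 0).Connected)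
    -- there is a nonzero `G`-fixed vector
    (hfix : ∃ m : M, m ≠ 0 ∧ ∀ g ∈ Subgroup.closure (Set.range s), g m = m) :
    ∀ z ∈ Subgroup.closure (Set.range s),
      (∀ g ∈ Subgroup.closure (Set.range s), Commute z g) → z = 1 := by
  intro z hz hcomm
  obtain ⟨m, hm0, hmfix⟩ := hfix
  have hzs (i : ι) : Commute (z : Module.End K M) (s i) :=
    (hcomm _ (Subgroup.subset_closure ⟨i, rfl⟩)).map
      LinearEquiv.automorphismGroup.toLinearMapMonoidHom
  choose lam hlam using fun i ↦
    exists_apply_eq_smul_of_commute_reflection (hzs i) (hdir i) (hsa i)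
  have hadj : ∀ i j, (SimpleGraph.fromRel fun i j => c i j ≠ 0 ∧ c j i ≠ 0).Adj i j →
      lam i = lam j := by
    rintro i j ⟨hij, ⟨hc, -⟩ | ⟨-, hc⟩⟩ <;>
      exact eigenvalue_eq_of_commute_of_apply_eq_add_smul (hzs i) (hlam i) (hlam j)
        (hact i j hij) hc (a.ne_zero i)
  obtain ⟨i₀⟩ := hconn.nonempty
  have hz1 : (z : Module.End K M) = 1 :=
    Module.End.eq_one_of_apply_basis_eq_smul a
      (fun i ↦ (hlam i).trans (by rw [(hconn i i₀).eq_of_forall_adj lam hadj])) hm0 (hmfix z hz)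
  exact LinearEquiv.toLinearMap_injective hz1

/-- In the setting of a reflection group with connected graph and direction vectors forming
a basis: if the space of `G`-fixed vectors is nonzero, then the center of `G` is trivial. -/
theorem center_trivial_of_fixed_vector
    (K M : Type*) [Field K] [CharZero K] [AddCommGroup M] [Module K M]
    (ι : Type*) [Fintype ι] (a : Module.Basis ι K M)
    (s : ι → (M ≃ₗ[K] M)) (c : ι → ι → K)
    (hs2 : ∀ i, s i * s i = 1) (hs1 : ∀ i, s i ≠ 1)
    (hsa : ∀ i, s i (a i) = -(a i))
    (hdir : ∀ i, ∀ x : M, s i x - x ∈ Submodule.span K ({a i} : Set M))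
    (hact : ∀ i j, i ≠ j → s i (a j) = a j + c i j • a i)
    (hedge : ∀ i j, i ≠ j → (Commute (s i) (s j) ↔ c i j = 0 ∧ c j i = 0))
    (hfin : ∀ i j, IsOfFinOrder (s i * s j))
    (hconn : (SimpleGraph.fromRel fun i j => c i j ≠ 0 ∧ c j i ≠ 0).Connected)
    -- there is a nonzero `G`-fixed vector
    (hfix : ∃ m : M, m ≠ 0 ∧ ∀ g ∈ Subgroup.closure (Set.range s), g m = m) :
    ∀ z ∈ Subgroup.closure (Set.range s),
      (∀ g ∈ Subgroup.closure (Set.range s), Commute z g) → z = 1 :=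
  center_trivial_of_fixed_vector_general K M ι a s c hsa hdir hact hconn hfix
end

section
/- Let φ be a nonzero G-invariant θ-sesquilinear form on M (θ an automorphism of K), and let (s,t) be an edge of the spanning tree T with s ⪯ t, so that s(a_t) = α a_s + a_t and t(a_s) = a_s + a_t with α ≠ 0. Writing β_{st} = φ(a_s, a_t), β_s = φ(a_s,a_s), β_t = φ(a_t,a_t): if β_{st} ≠ 0 then β_t = -2β_{st}, φ(a_t,a_s) = β_{st}, θ(α)β_s = -2β_{st}, and θ(α) = α. -/
/-!
Expand invariance of the form on the pairs `(a_s, a_t)`, `(a_s, a_s)`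
under `t` and `(a_s, a_t)`, `(a_t, a_t)` under `s`: the first two give `β_t = -2β_{st}` and
`φ(a_t, a_s) = β_{st}`; the other two give `θ(α)β_s = -2β_{st}` and
`θ(α) φ(a_t, a_s) = α β_{st}`, so `θ(α) = α` once `β_{st} ≠ 0`.
-/

section InvariantSesquilinear

variable {K V : Type*} [CommRing K] [AddCommGroup V] [Module K V] {σ : K →+* K}
  (B : V →ₗ[K] V →ₛₗ[σ] K) {a b : V}

theorem apply_self_eq_neg_two_mul_of_invariant {t : V → V}
    (hinv : ∀ x y, B (t x) (t y) = B x y) (hta : t a = a + b) (htb : t b = -b) :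
    B b b = -2 * B a b := by
  have h := hinv a b
  simp only [hta, htb, map_add, map_neg, LinearMap.add_apply] at h
  linear_combination -h

theorem apply_swap_of_invariant {t : V → V}
    (hinv : ∀ x y, B (t x) (t y) = B x y) (hta : t a = a + b) (htb : t b = -b) :
    B b a = B a b := by
  have h := hinv a a
  simp only [hta, map_add, LinearMap.add_apply] at h
  linear_combination h - apply_self_eq_neg_two_mul_of_invariant B hinv hta htb

theorem map_mul_apply_self_eq_neg_two_mul_of_invariant {s : V → V} {α : K}
    (hinv : ∀ x y, B (s x) (s y) = B x y) (hsa : s a = -a) (hsb : s b = α • a + b) :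
    σ α * B a a = -2 * B a b := by
  have h := hinv a b
  simp only [hsa, hsb, map_add, map_neg, map_smulₛₗ, LinearMap.neg_apply, smul_eq_mul] at h
  linear_combination -h

theorem map_mul_apply_swap_eq_mul_of_invariant {s : V → V} {α : K}
    (hinv : ∀ x y, B (s x) (s y) = B x y) (hsa : s a = -a) (hsb : s b = α • a + b) :
    σ α * B b a = α * B a b := by
  have h := hinv b b
  simp only [hsb, map_add, map_smulₛₗ, LinearMap.add_apply, LinearMap.smul_apply,
    RingHom.id_apply, smul_eq_mul] at h
  linear_combination h - α * map_mul_apply_self_eq_neg_two_mul_of_invariant B hinv hsa hsb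

end InvariantSesquilinear

theorem sesquilinear_invariant_tree_edge_general
    (K V : Type*) [Field K] [AddCommGroup V] [Module K V]
    (θ : K ≃+* K)
    (φ : V → V → K)
    (hadd₁ : ∀ x x' y : V, φ (x + x') y = φ x y + φ x' y)
    (hadd₂ : ∀ x y y' : V, φ x (y + y') = φ x y + φ x y')
    (hsmul₁ : ∀ (c : K) (x y : V), φ (c • x) y = c * φ x y)
    (hsmul₂ : ∀ (c : K) (x y : V), φ x (c • y) = θ c * φ x y)
    (s t : Module.End K V) (as at' : V) (α : K)
    (hsas : s as = -as) (hsat : s at' = α • as + at')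
    (htat : t at' = -at') (htas : t as = as + at')
    (hinvs : ∀ x y : V, φ (s x) (s y) = φ x y)
    (hinvt : ∀ x y : V, φ (t x) (t y) = φ x y)
    (hβ : φ as at' ≠ 0) :
    φ at' at' = -2 * φ as at' ∧
    φ at' as = φ as at' ∧
    θ α * φ as as = -2 * φ as at' ∧
    θ α = α := by
  let B : V →ₗ[K] V →ₛₗ[(θ : K →+* K)] K :=
    LinearMap.mk₂'ₛₗ (RingHom.id K) (θ : K →+* K) φ hadd₁ hsmul₁ hadd₂ hsmul₂
  have hswap : φ at' as = φ as at' := apply_swap_of_invariant B hinvt htas htat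
  refine ⟨apply_self_eq_neg_two_mul_of_invariant B hinvt htas htat, hswap,
    map_mul_apply_self_eq_neg_two_mul_of_invariant B hinvs hsas hsat, ?_⟩
  have h : θ α * φ at' as = α * φ as at' :=
    map_mul_apply_swap_eq_mul_of_invariant B hinvs hsas hsat
  rw [hswap] at h
  exact mul_right_cancel₀ hβ h

/-- Let `φ` be a nonzero `G`-invariant `θ`-sesquilinear form and `(s,t)` a tree edge with
`s ⪯ t`, so that `s(a_t) = α a_s + a_t` and `t(a_s) = a_s + a_t` with `α ≠ 0`. If
`β_{st} = φ(a_s,a_t) ≠ 0` then `β_t = -2β_{st}`, `φ(a_t,a_s) = β_{st}`,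
`θ(α)β_s = -2β_{st}` and `θ(α) = α`. -/
theorem sesquilinear_invariant_tree_edge
    (K V : Type*) [Field K] [CharZero K] [AddCommGroup V] [Module K V]
    (θ : K ≃+* K)
    (φ : V → V → K)
    (hadd₁ : ∀ x x' y : V, φ (x + x') y = φ x y + φ x' y)
    (hadd₂ : ∀ x y y' : V, φ x (y + y') = φ x y + φ x y')
    (hsmul₁ : ∀ (c : K) (x y : V), φ (c • x) y = c * φ x y)
    (hsmul₂ : ∀ (c : K) (x y : V), φ x (c • y) = θ c * φ x y)
    (s t : Module.End K V) (as at' : V) (α : K) (hα : α ≠ 0)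
    (hs2 : s * s = 1) (ht2 : t * t = 1)
    (hsas : s as = -as) (hsat : s at' = α • as + at')
    (htat : t at' = -at') (htas : t as = as + at')
    (hinvs : ∀ x y : V, φ (s x) (s y) = φ x y)
    (hinvt : ∀ x y : V, φ (t x) (t y) = φ x y)
    (hβ : φ as at' ≠ 0) :
    φ at' at' = -2 * φ as at' ∧
    φ at' as = φ as at' ∧
    θ α * φ as as = -2 * φ as at' ∧
    θ α = α :=
  sesquilinear_invariant_tree_edge_general K V θ φ hadd₁ hadd₂ hsmul₁ hsmul₂ s t as at' α hsas hsat
    htat htas hinvs hinvt hβ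
end

section
/- Under the hypotheses of the fundamental construction, the space Φ of G-invariant θ-sesquilinear forms on M has dimension at most 1. -/
/-!
Let `f` be an invariant form. The reflection `sᵢ` negates `aᵢ` and moves every vector by a
multiple of `aᵢ`; invariance under it gives `2 f(aᵢ, y) = -θ(c) f(aᵢ, aᵢ)` and
`2 f(x, aᵢ) = -c f(aᵢ, aᵢ)`, where `c aᵢ` is how far `sᵢ` moves `y`, resp. `x`. So if
`f(aᵢ, aᵢ) = 0` the row of `aᵢ` vanishes, and for an edge `mᵢⱼ ≥ 3`, writing `sⱼ aᵢ = aᵢ + c aⱼ`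
with `c ≠ 0`, also `f(aⱼ, aⱼ) = 0`. By connectivity `f = 0`; thus `f ↦ f(aᵢ₀, aᵢ₀)` is injective
on invariant forms.

That `c ≠ 0`: otherwise `-sᵢsⱼ` is unipotent on `span {aᵢ, aⱼ}` and of finite order, hence
trivial there in characteristic zero, so `sᵢ` and `sⱼ` commute. But `(sᵢsⱼ)² ≠ 1` in `W`, as the
geometric representation over `ℝ` shows: there `sᵢsⱼ` acts on `span {eᵢ, eⱼ}` as a rotation by
`2π / mᵢⱼ`.
-/

theorem SimpleGraph.Connected.induction_of_adj {V : Type*} {G : SimpleGraph V} (hG : G.Connected)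
    {P : V → Prop} (hP : ∀ u v, G.Adj u v → P u → P v) {u : V} (hu : P u) (v : V) : P v := by
  obtain ⟨p⟩ := hG u v
  induction p with
  | nil => exact hu
  | cons h _ ih => exact ih (hP _ _ h hu)

theorem exists_mul_eq_mul_of_not_both_zero {K : Type*} [CommRing K] [Nontrivial K] (p q : K) :
    ∃ c d : K, ¬(c = 0 ∧ d = 0) ∧ c * p = d * q := by
  by_cases hq : q = 0
  · exact ⟨0, 1, by simp, by simp [hq]⟩
  · exact ⟨q, p, fun h => hq h.1, mul_comm q p⟩

section LinearAlgebra

variable {K V : Type*} [Field K] [AddCommGroup V] [Module K V]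

theorem exists_eq_add_smul_of_sub_mem_span_singleton {x y v : V} (h : y - x ∈ K ∙ v) :
    ∃ c : K, y = x + c • v := by
  obtain ⟨c, hc⟩ := Submodule.mem_span_singleton.mp h
  exact ⟨c, by rw [hc, add_sub_cancel]⟩

theorem LinearEquiv.pow_apply_of_apply_eq_neg (g : V ≃ₗ[K] V) {u v : V} {c : K}
    (hu : g u = -u) (hv : g v = -v - c • u) (n : ℕ) :
    (g ^ n) v = (-1 : K) ^ n • (v + (n * c) • u) := by
  induction n with
  | zero => simp
  | succ n ih =>
    rw [pow_succ', LinearEquiv.mul_apply, ih, map_smul, map_add, map_smul, hu, hv]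
    push_cast
    module

theorem LinearEquiv.mul_sq_eq_one_of_reflections {r s : V ≃ₗ[K] V} {u v : V}
    (hr : ∀ x, r x - x ∈ K ∙ u) (hs : ∀ x, s x - x ∈ K ∙ v) (hru : r u = -u) (hsv : s v = -v)
    (hrv : r v = v) (hsu : s u = u) : (r * s) ^ 2 = 1 := by
  ext x
  obtain ⟨c, hc⟩ := exists_eq_add_smul_of_sub_mem_span_singleton (hr x)
  obtain ⟨d, hd⟩ := exists_eq_add_smul_of_sub_mem_span_singleton (hs x)
  have hrs : (r * s) x = x + c • u + d • v := by
    rw [LinearEquiv.mul_apply, hd, map_add, map_smul, hrv, hc]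
  rw [sq, LinearEquiv.mul_apply, hrs, map_add, map_add, map_smul, map_smul, hrs,
    LinearEquiv.mul_apply, LinearEquiv.mul_apply, hsu, hru, hsv, map_neg, hrv]
  change _ = x
  module

end LinearAlgebra

open Real Finsupp

theorem Module.End.sin_smul_pow_apply {E : Type*} [AddCommGroup E] [Module ℝ E]
    (P : Module.End ℝ E) (α : ℝ) (v : E) (hv : P (P v) = (2 * cos α) • P v - v) (n : ℕ) :
    sin α • (P ^ n) v = sin (n * α) • P v - sin ((n - 1) * α) • v := by
  induction n with
  | zero => simp [neg_mul, sin_neg]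
  | succ n ih =>
    have hsin : sin ((n + 1) * α) = 2 * cos α * sin (n * α) - sin ((n - 1) * α) := by
      rw [show (n + 1) * α = n * α + α by ring, show (n - 1) * α = n * α - α by ring,
        sin_add, sin_sub]
      ring
    rw [pow_succ', Module.End.mul_apply, ← map_smul, ih, map_sub, map_smul, map_smul, hv]
    push_cast
    rw [hsin, add_sub_cancel_right]
    module

namespace CoxeterMatrix

variable {B : Type*} (Mat : CoxeterMatrix B)

/-- `Mat.M i j = 0` encodes `mᵢⱼ = ∞`, where `π / 0 = 0` gives the usual value `-1`. -/
noncomputable def geomCoeff (i j : B) : ℝ := -cos (π / Mat.M i j)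

theorem geomCoeff_symm (i j : B) : Mat.geomCoeff i j = Mat.geomCoeff j i := by
  rw [geomCoeff, geomCoeff, Mat.symmetric i j]

@[simp]
theorem geomCoeff_self (i : B) : Mat.geomCoeff i i = 1 := by
  simp [geomCoeff]

theorem geomCoeff_eq_zero {i j : B} (h : Mat.M i j = 2) : Mat.geomCoeff i j = 0 := by
  simp [geomCoeff, h]

theorem geomCoeff_sq_lt_one {i j : B} (h : 2 ≤ Mat.M i j) : Mat.geomCoeff i j ^ 2 < 1 := by
  have hm : (2 : ℝ) ≤ Mat.M i j := by exact_mod_cast h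
  have hpos : 0 < π / Mat.M i j := div_pos pi_pos (by linarith)
  have hle : π / Mat.M i j ≤ π / 2 := div_le_div_of_nonneg_left pi_pos.le two_pos hm
  have hcos_nonneg : 0 ≤ cos (π / Mat.M i j) := cos_nonneg_of_mem_Icc ⟨by linarith, hle⟩
  have hcos_lt : cos (π / Mat.M i j) < 1 := by
    simpa using strictAntiOn_cos ⟨le_rfl, pi_pos.le⟩ ⟨hpos.le, by linarith [pi_pos]⟩ hpos
  rw [geomCoeff, neg_sq]
  nlinarith

theorem geomCoeff_ne_zero {i j : B} (h : 3 ≤ Mat.M i j) : Mat.geomCoeff i j ≠ 0 := by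
  have hm : (3 : ℝ) ≤ Mat.M i j := by exact_mod_cast h
  have hlt : π / Mat.M i j < π / 2 := div_lt_div_of_pos_left pi_pos two_pos (by linarith)
  have hpos : 0 < π / Mat.M i j := div_pos pi_pos (by linarith)
  rw [geomCoeff, neg_ne_zero]
  exact (cos_pos_of_mem_Ioo ⟨by linarith, hlt⟩).ne'

noncomputable def geomCoroot (j : B) : (B →₀ ℝ) →ₗ[ℝ] ℝ :=
  linearCombination ℝ fun i => Mat.geomCoeff i j

@[simp]
theorem geomCoroot_single (i j : B) : Mat.geomCoroot j (single i 1) = Mat.geomCoeff i j := by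
  simp [geomCoroot]

noncomputable def geomReflection (i : B) : Module.End ℝ (B →₀ ℝ) :=
  LinearMap.id - (2 : ℝ) • (Mat.geomCoroot i).smulRight (single i 1)

theorem geomReflection_apply (i : B) (x : B →₀ ℝ) :
    Mat.geomReflection i x = x - (2 * Mat.geomCoroot i x) • single i 1 := by
  simp [geomReflection]

theorem geomReflection_apply_of_geomCoroot_eq_zero {i : B} {x : B →₀ ℝ}
    (hx : Mat.geomCoroot i x = 0) : Mat.geomReflection i x = x := by
  simp [geomReflection_apply, hx]

theorem geomReflection_mul_self (i : B) : Mat.geomReflection i * Mat.geomReflection i = 1 := by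
  refine LinearMap.ext fun x => ?_
  rw [Module.End.mul_apply, geomReflection_apply, geomReflection_apply, map_sub, map_smul,
    geomCoroot_single, geomCoeff_self, smul_eq_mul, mul_one, Module.End.one_apply]
  module

section Plane

variable {Mat} {i j : B}

theorem geomReflection_mul_apply_plane (p q : ℝ) :
    (Mat.geomReflection i * Mat.geomReflection j) (p • single i 1 + q • single j 1) =
      ((4 * Mat.geomCoeff i j ^ 2 - 1) * p + 2 * Mat.geomCoeff i j * q) • single i (1 : ℝ) +
        (-(2 * Mat.geomCoeff i j) * p - q) • single j 1 := by
  simp only [Module.End.mul_apply, geomReflection_apply, map_add, map_sub, map_smul,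
    geomCoroot_single, geomCoeff_self]
  rw [Mat.geomCoeff_symm j i]
  match_scalars <;> ring

theorem geomReflection_mul_pow_apply_plane (h : 2 ≤ Mat.M i j) (p q : ℝ) :
    ((Mat.geomReflection i * Mat.geomReflection j) ^ Mat.M i j)
        (p • single i 1 + q • single j 1) = p • single i (1 : ℝ) + q • single j 1 := by
  rcases h.eq_or_lt with h2 | h3
  · rw [← h2, sq, Module.End.mul_apply, geomReflection_mul_apply_plane,
      geomReflection_mul_apply_plane, Mat.geomCoeff_eq_zero h2.symm]
    match_scalars <;> ring
  · have hm : (3 : ℝ) ≤ Mat.M i j := by exact_mod_cast h3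
    set α := 2 * π / Mat.M i j
    -- on the plane, `σᵢ σⱼ` satisfies `X² - 2 cos α X + 1 = 0`: it is a rotation by `α`
    have hcos : 4 * Mat.geomCoeff i j ^ 2 - 2 = 2 * cos α := by
      rw [geomCoeff, show α = 2 * (π / Mat.M i j) by ring, cos_two_mul]
      ring
    have hsin : sin α ≠ 0 := by
      refine (sin_pos_of_pos_of_lt_pi (by positivity) ?_).ne'
      rw [div_lt_iff₀ (by linarith)]
      nlinarith [pi_pos]
    have hmα : (Mat.M i j : ℝ) * α = 2 * π := mul_div_cancel₀ _ (by positivity)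
    refine smul_right_injective _ hsin ?_
    dsimp only
    rw [Module.End.sin_smul_pow_apply _ α _ ?_, hmα, sub_one_mul, hmα, sin_two_pi, sin_two_pi_sub]
    · module
    · simp only [geomReflection_mul_apply_plane, ← hcos]
      match_scalars <;> ring

theorem exists_eq_add_plane (h : Mat.geomCoeff i j ^ 2 ≠ 1) (x : B →₀ ℝ) :
    ∃ (w : B →₀ ℝ) (p q : ℝ), Mat.geomCoroot i w = 0 ∧ Mat.geomCoroot j w = 0 ∧
      x = w + (p • single i 1 + q • single j 1) := by
  set γ := Mat.geomCoeff i j with hγ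
  have hδ : 1 - γ ^ 2 ≠ 0 := sub_ne_zero.mpr (Ne.symm h)
  set p := (Mat.geomCoroot i x - γ * Mat.geomCoroot j x) / (1 - γ ^ 2)
  set q := (Mat.geomCoroot j x - γ * Mat.geomCoroot i x) / (1 - γ ^ 2)
  refine ⟨x - (p • single i 1 + q • single j 1), p, q, ?_, ?_, by abel⟩ <;>
  · simp only [map_sub, map_add, map_smul, geomCoroot_single, geomCoeff_self,
      Mat.geomCoeff_symm j i, ← hγ, smul_eq_mul, p, q]
    field_simp
    ring

theorem geomReflection_mul_pow_eq_one (i j : B) :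
    (Mat.geomReflection i * Mat.geomReflection j) ^ Mat.M i j = 1 := by
  rcases eq_or_ne i j with rfl | hij
  · rw [Mat.diagonal, pow_one, geomReflection_mul_self]
  obtain h0 | h2 : Mat.M i j = 0 ∨ 2 ≤ Mat.M i j := by
    have := Mat.off_diagonal i j hij
    omega
  · rw [h0, pow_zero]
  refine LinearMap.ext fun x => ?_
  obtain ⟨w, p, q, hwi, hwj, rfl⟩ := exists_eq_add_plane (Mat.geomCoeff_sq_lt_one h2).ne x
  have hw : (Mat.geomReflection i * Mat.geomReflection j) w = w := by
    rw [Module.End.mul_apply, Mat.geomReflection_apply_of_geomCoroot_eq_zero hwj,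
      Mat.geomReflection_apply_of_geomCoroot_eq_zero hwi]
  rw [map_add, geomReflection_mul_pow_apply_plane h2, Module.End.pow_apply,
    Function.iterate_fixed hw, Module.End.one_apply]

end Plane

theorem isLiftable_geomReflection : Mat.IsLiftable Mat.geomReflection :=
  Mat.geomReflection_mul_pow_eq_one

theorem geomReflection_mul_sq_ne_one {i j : B} (h : 3 ≤ Mat.M i j) :
    (Mat.geomReflection i * Mat.geomReflection j) ^ 2 ≠ 1 := by
  intro h1
  have hij : i ≠ j := by
    rintro rfl
    rw [Mat.diagonal] at h
    omega
  have key := LinearMap.congr_fun h1 ((0 : ℝ) • single i 1 + (1 : ℝ) • single j 1)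
  rw [sq, Module.End.mul_apply, geomReflection_mul_apply_plane, geomReflection_mul_apply_plane,
    Module.End.one_apply] at key
  replace key := congrArg (· j) key
  simp only [coe_add, coe_smul, Pi.add_apply, Pi.smul_apply, single_eq_same, single_eq_of_ne' hij,
    smul_eq_mul] at key
  exact Mat.geomCoeff_ne_zero h (by nlinarith [sq_nonneg (Mat.geomCoeff i j)])

end CoxeterMatrix

theorem CoxeterSystem.simple_mul_simple_sq_ne_one {B W : Type*} [Group W] {Mat : CoxeterMatrix B}
    (cs : CoxeterSystem Mat W) {i j : B} (h : 3 ≤ Mat.M i j) :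
    (cs.simple i * cs.simple j) ^ 2 ≠ 1 := by
  intro h1
  apply Mat.geomReflection_mul_sq_ne_one h
  simpa [cs.lift_apply_simple Mat.isLiftable_geomReflection] using
    congrArg (cs.lift ⟨_, Mat.isLiftable_geomReflection⟩) h1

namespace LinearMap

variable {K V : Type*} [Field K] [AddCommGroup V] [Module K V] {σ : K →+* K}
  (f : V →ₗ[K] V →ₛₗ[σ] K) {r : V ≃ₗ[K] V} {v : V}

theorem apply_root_eq_zero_of_isotropic [NeZero (2 : K)] (hr : ∀ x, r x - x ∈ K ∙ v)
    (hrv : r v = -v) (hf : ∀ x y, f (r x) (r y) = f x y) (hvv : f v v = 0) (y : V) :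
    f v y = 0 := by
  obtain ⟨c, hc⟩ := exists_eq_add_smul_of_sub_mem_span_singleton (hr y)
  have h := hf v y
  simp only [hrv, hc, map_neg, map_add, map_smulₛₗ, neg_apply, hvv, neg_zero, smul_zero,
    add_zero] at h
  have h2 : (2 : K) * f v y = 0 := by linear_combination -h
  exact (mul_eq_zero.mp h2).resolve_left two_ne_zero

theorem two_mul_apply_root (hrv : r v = -v) (hf : ∀ x y, f (r x) (r y) = f x y) {x : V} {c : K}
    (hx : r x = x + c • v) : 2 * f x v = -(c * f v v) := by
  have h := hf x v
  simp only [hrv, hx, map_add, map_smul, map_neg, add_apply, smul_apply,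
    smul_eq_mul] at h
  linear_combination -h

end LinearMap

section ReflectionRepresentation

variable {B W K V : Type*} [Group W] {Mat : CoxeterMatrix B} {cs : CoxeterSystem Mat W}
  [Field K] [CharZero K] [AddCommGroup V] [Module K V] {R : W →* (V ≃ₗ[K] V)}
  {a : Module.Basis B K V} (hra : ∀ i, R (cs.simple i) (a i) = -(a i))
  (hdir : ∀ i x, R (cs.simple i) x - x ∈ K ∙ a i)
  (horder : ∀ i j, orderOf (R (cs.simple i) * R (cs.simple j)) =
    orderOf (cs.simple i * cs.simple j))
include hra hdir horder

theorem apply_simple_ne_self {i j : B} (h : 3 ≤ Mat.M i j) : R (cs.simple j) (a i) ≠ a i := by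
  intro hji
  have hij : i ≠ j := by
    rintro rfl
    rw [Mat.diagonal] at h
    omega
  obtain ⟨c, hc⟩ := exists_eq_add_smul_of_sub_mem_span_singleton (hdir i (a j))
  set g := R (cs.simple i) * R (cs.simple j)
  have hgi : g (a i) = -a i := by rw [LinearEquiv.mul_apply, hji, hra]
  have hgj : g (a j) = -a j - c • a i := by
    rw [LinearEquiv.mul_apply, hra, map_neg, hc]
    abel
  -- `-g` is unipotent on `span {a i, a j}`, so `g ^ Mat.M i j = 1` forces `c = 0`
  have hc0 : c = 0 := by
    have hpow := g.pow_apply_of_apply_eq_neg hgi hgj (Mat.M i j)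
    rw [show g = R (cs.simple i * cs.simple j) from (map_mul ..).symm, ← map_pow,
      cs.simple_mul_simple_pow, map_one] at hpow
    simpa [hij, show Mat.M i j ≠ 0 by omega] using congrArg (fun x => a.repr x i) hpow
  have hsq : g ^ 2 = 1 := LinearEquiv.mul_sq_eq_one_of_reflections (hdir i) (hdir j) (hra i)
    (hra j) (by rw [hc, hc0, zero_smul, add_zero]) hji
  apply cs.simple_mul_simple_sq_ne_one h
  rw [← orderOf_dvd_iff_pow_eq_one, ← horder, orderOf_dvd_iff_pow_eq_one]
  exact hsq

variable {σ : K →+* K} (f : V →ₗ[K] V →ₛₗ[σ] K) (hf : ∀ w x y, f (R w x) (R w y) = f x y)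
include hf

theorem isotropic_simpleRoot_of_three_le {i j : B} (h : 3 ≤ Mat.M i j)
    (hi : f (a i) (a i) = 0) : f (a j) (a j) = 0 := by
  obtain ⟨c, hc⟩ := exists_eq_add_smul_of_sub_mem_span_singleton (hdir j (a i))
  have hc0 : c ≠ 0 := by
    rintro rfl
    exact apply_simple_ne_self hra hdir horder h (by rw [hc, zero_smul, add_zero])
  have h2 := f.two_mul_apply_root (hra j) (hf _) hc
  rw [f.apply_root_eq_zero_of_isotropic (hdir i) (hra i) (hf _) hi, mul_zero, zero_eq_neg] at h2
  exact (mul_eq_zero.mp h2).resolve_left hc0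

theorem eq_zero_of_isotropic_simpleRoot
    (hconn : (SimpleGraph.fromRel fun i j => 3 ≤ Mat.M i j).Connected) {i₀ : B}
    (h₀ : f (a i₀) (a i₀) = 0) : f = 0 := by
  have hall : ∀ i, f (a i) (a i) = 0 := by
    refine hconn.induction_of_adj (fun i j hij hi => ?_) h₀
    rcases (SimpleGraph.fromRel_adj _ i j).mp hij with ⟨-, h | h⟩
    · exact isotropic_simpleRoot_of_three_le hra hdir horder f hf h hi
    · exact isotropic_simpleRoot_of_three_le hra hdir horder f hf (Mat.symmetric i j ▸ h) hi
  exact a.ext fun i => LinearMap.ext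
    (f.apply_root_eq_zero_of_isotropic (hdir i) (hra i) (hf _) (hall i))

end ReflectionRepresentation

theorem invariant_sesquilinear_forms_dim_le_one_general
    (B : Type*) (Mat : CoxeterMatrix B)
    (W : Type*) [Group W] (cs : CoxeterSystem Mat W)
    (K V : Type*) [Field K] [CharZero K] [AddCommGroup V] [Module K V]
    (θ : K ≃+* K)
    (R : W →* (V ≃ₗ[K] V)) (a : Module.Basis B K V)
    (hra : ∀ i, R (cs.simple i) (a i) = -(a i))
    (hdir : ∀ i, ∀ x : V, R (cs.simple i) x - x ∈ Submodule.span K ({a i} : Set V))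
    (horder : ∀ i j, orderOf (R (cs.simple i) * R (cs.simple j)) =
        orderOf (cs.simple i * cs.simple j))
    (hconn : (SimpleGraph.fromRel fun i j => 3 ≤ Mat.M i j).Connected) :
    ∀ φ ψ : V → V → K,
      (∀ x x' y : V, φ (x + x') y = φ x y + φ x' y) →
      (∀ x y y' : V, φ x (y + y') = φ x y + φ x y') →
      (∀ (c : K) (x y : V), φ (c • x) y = c * φ x y) →
      (∀ (c : K) (x y : V), φ x (c • y) = θ c * φ x y) →
      (∀ (w : W) (x y : V), φ (R w x) (R w y) = φ x y) →
      (∀ x x' y : V, ψ (x + x') y = ψ x y + ψ x' y) →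
      (∀ x y y' : V, ψ x (y + y') = ψ x y + ψ x y') →
      (∀ (c : K) (x y : V), ψ (c • x) y = c * ψ x y) →
      (∀ (c : K) (x y : V), ψ x (c • y) = θ c * ψ x y) →
      (∀ (w : W) (x y : V), ψ (R w x) (R w y) = ψ x y) →
      ∃ c d : K, ¬(c = 0 ∧ d = 0) ∧ ∀ x y : V, c * φ x y = d * ψ x y := by
  intro φ ψ hφ₁ hφ₂ hφ₃ hφ₄ hφ₅ hψ₁ hψ₂ hψ₃ hψ₄ hψ₅
  obtain ⟨Φ, hΦ⟩ : ∃ Φ : V →ₗ[K] V →ₛₗ[(θ : K →+* K)] K, ∀ x y, Φ x y = φ x y :=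
    ⟨.mk₂'ₛₗ _ _ φ hφ₁ hφ₃ hφ₂ hφ₄, fun _ _ => rfl⟩
  obtain ⟨Ψ, hΨ⟩ : ∃ Ψ : V →ₗ[K] V →ₛₗ[(θ : K →+* K)] K, ∀ x y, Ψ x y = ψ x y :=
    ⟨.mk₂'ₛₗ _ _ ψ hψ₁ hψ₃ hψ₂ hψ₄, fun _ _ => rfl⟩
  obtain ⟨i₀⟩ := hconn.nonempty
  obtain ⟨c, d, hcd, hcomb⟩ :=
    exists_mul_eq_mul_of_not_both_zero (φ (a i₀) (a i₀)) (ψ (a i₀) (a i₀))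
  refine ⟨c, d, hcd, fun x y => ?_⟩
  have hzero : c • Φ - d • Ψ = 0 :=
    eq_zero_of_isotropic_simpleRoot hra hdir horder _ (by simp [hΦ, hΨ, hφ₅, hψ₅]) hconn
      (i₀ := i₀) (by simp [hΦ, hΨ, hcomb])
  simpa [hΦ, hΨ, sub_eq_zero] using LinearMap.congr_fun₂ hzero x y

/-- Under the hypotheses of the fundamental construction (reflection representation of an
irreducible 2-spherical Coxeter system of finite rank), the space of `G`-invariant
`θ`-sesquilinear forms on `M` has dimension at most 1. -/
theorem invariant_sesquilinear_forms_dim_le_one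
    (B : Type*) [Fintype B] (Mat : CoxeterMatrix B)
    (W : Type*) [Group W] (cs : CoxeterSystem Mat W)
    (K V : Type*) [Field K] [CharZero K] [AddCommGroup V] [Module K V]
    (θ : K ≃+* K)
    (R : W →* (V ≃ₗ[K] V)) (a : Module.Basis B K V)
    (hra : ∀ i, R (cs.simple i) (a i) = -(a i))
    (hdir : ∀ i, ∀ x : V, R (cs.simple i) x - x ∈ Submodule.span K ({a i} : Set V))
    (horder : ∀ i j, orderOf (R (cs.simple i) * R (cs.simple j)) =
        orderOf (cs.simple i * cs.simple j))
    (hsph : ∀ i j, Mat.M i j ≠ 0)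
    (hconn : (SimpleGraph.fromRel fun i j => 3 ≤ Mat.M i j).Connected) :
    ∀ φ ψ : V → V → K,
      (∀ x x' y : V, φ (x + x') y = φ x y + φ x' y) →
      (∀ x y y' : V, φ x (y + y') = φ x y + φ x y') →
      (∀ (c : K) (x y : V), φ (c • x) y = c * φ x y) →
      (∀ (c : K) (x y : V), φ x (c • y) = θ c * φ x y) →
      (∀ (w : W) (x y : V), φ (R w x) (R w y) = φ x y) →
      (∀ x x' y : V, ψ (x + x') y = ψ x y + ψ x' y) →
      (∀ x y y' : V, ψ x (y + y') = ψ x y + ψ x y') →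
      (∀ (c : K) (x y : V), ψ (c • x) y = c * ψ x y) →
      (∀ (c : K) (x y : V), ψ x (c • y) = θ c * ψ x y) →
      (∀ (w : W) (x y : V), ψ (R w x) (R w y) = ψ x y) →
      ∃ c d : K, ¬(c = 0 ∧ d = 0) ∧ ∀ x y : V, c * φ x y = d * ψ x y :=
  invariant_sesquilinear_forms_dim_le_one_general B Mat W cs K V θ R a hra hdir horder hconn
end

section
/- Suppose there exists a nonzero G-invariant bilinear form φ on M, with G arising from the fundamental construction with Cartan matrix Car(G). Setting φ(aᵢ, aᵢ) = 2γᵢ (with the normalization γ₁ = 1), the Gram matrix of φ in the basis (a₁, …, aₙ) equals diag(1, γ₂, …, γₙ) · Car(G). -/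
theorem LinearMap.BilinForm.two_mul_apply_eq_of_invariant {R M : Type*} [CommRing R]
    [AddCommGroup M] [Module R M] (φ : LinearMap.BilinForm R M) (s : Module.End R M)
    {α x : M} {c : R} (hα : s α = -α) (hx : s x = x - c • α)
    (hinv : φ (s α) (s x) = φ α x) :
    2 * φ α x = c * φ α α := by
  rw [hα, hx] at hinv
  simp only [map_neg, map_sub, map_smul, LinearMap.neg_apply, smul_eq_mul] at hinv
  linear_combination -hinv

theorem gram_matrix_eq_diagonal_mul_cartan_general
    (K V : Type*) [Field K] [CharZero K] [AddCommGroup V] [Module K V]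
    (ι : Type*) [Fintype ι] [DecidableEq ι]
    (a : Module.Basis ι K V) (g : ι → Module.End K V) (c : ι → ι → K)
    (hact : ∀ i j, g i (a j) = a j - c i j • a i)
    (hcii : ∀ i, c i i = 2)
    (φ : LinearMap.BilinForm K V)
    (hinv : ∀ i, ∀ x y : V, φ (g i x) (g i y) = φ x y)
    (γ : ι → K) (hγ : ∀ i, φ (a i) (a i) = 2 * γ i) :
    Matrix.of (fun i j => φ (a i) (a j)) = Matrix.diagonal γ * Matrix.of c := by
  ext i j
  have hneg : g i (a i) = -a i := by
    rw [hact, hcii, two_smul, sub_add_cancel_left]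
  have hrow : 2 * φ (a i) (a j) = c i j * φ (a i) (a i) :=
    φ.two_mul_apply_eq_of_invariant (g i) hneg (hact i j) (hinv i _ _)
  rw [Matrix.diagonal_mul, Matrix.of_apply, Matrix.of_apply]
  linear_combination (hrow + c i j * hγ i) / 2

/-- If there is a nonzero `G`-invariant bilinear form `φ` on `M`, with `G` arising from the
fundamental construction with Cartan matrix `Car(G) = (c_{ij})` (so `sᵢ(aⱼ) = aⱼ - c_{ij}aᵢ`,
`c_{ii} = 2`), then, writing `φ(aᵢ,aᵢ) = 2γᵢ` with the normalization `γ_{i₀} = 1`, the Gram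
matrix of `φ` in the basis `(aᵢ)` equals `diag(γ) · Car(G)`. -/
theorem gram_matrix_eq_diagonal_mul_cartan
    (K V : Type*) [Field K] [CharZero K] [AddCommGroup V] [Module K V]
    (ι : Type*) [Fintype ι] [DecidableEq ι]
    (a : Module.Basis ι K V) (g : ι → Module.End K V) (c : ι → ι → K)
    (hg2 : ∀ i, g i * g i = 1)
    (hact : ∀ i j, g i (a j) = a j - c i j • a i)
    (hcii : ∀ i, c i i = 2)
    (φ : LinearMap.BilinForm K V) (hφ : φ ≠ 0)
    (hinv : ∀ i, ∀ x y : V, φ (g i x) (g i y) = φ x y)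
    (γ : ι → K) (hγ : ∀ i, φ (a i) (a i) = 2 * γ i)
    (i₀ : ι) (hnorm : γ i₀ = 1) :
    Matrix.of (fun i j => φ (a i) (a j)) = Matrix.diagonal γ * Matrix.of c :=
  gram_matrix_eq_diagonal_mul_cartan_general K V ι a g c hact hcii φ hinv γ hγ
end
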